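/- For all natural numbers L and N with N ≤ L and L ≡ N (mod 2), and every real number k, the Fourier–Legendre coefficient a_{LN}(k) = ((2L+1)/2) ∫_{−1}^{1} J_N(kx) P_L(x) dx equals √π · 2^{−2L−1} · (2L+1) · (−1)^{(L−N)/2} · k^L · (C(L, (L−N)/2) / Γ(L+3/2)) · ∑_{M=0}^∞ [ ((L+1)/2)_M · ((L+2)/2)_M / ( (L+3/2)_M · ((L−N)/2+1)_M · ((L+N)/2+1)_M ) ] · (−k²/4)^M / M!. -/

import Mathlib

/-!
Expanding `J_N(kx)` in its power series and integrating termwise (the series is dominated by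
`(|kx|/2)^N e^{(kx)²/4}`) reduces `a_{LN}(k)` to the moments `∫ x^n P_L(x) dx`. By Rodrigues'
formula and `L` integrations by parts these vanish for `n < L`, and for `n = L + 2M` they reduce to
`∫ x^{2M} (x² - 1)^L dx`, which satisfies a one-step recurrence in `L`. Reindexing the surviving
terms by `m = M + (L - N)/2`, they match the `₂F₃` terms through the duplication formula
`(a)_{2M} = 4^M (a/2)_M ((a+1)/2)_M` and `Γ(a) (a)_M = Γ(a + M)`.
-/

open Real

/-- Bessel function of the first kind of integer order `N`, defined by its
everywhere-convergent power series. -/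
noncomputable def besselJ (N : ℕ) (x : ℝ) : ℝ :=
  ∑' m : ℕ, (-1 : ℝ) ^ m * (x / 2) ^ (2 * m + N) /
    ((m.factorial : ℝ) * ((m + N).factorial : ℝ))

/-- Legendre polynomial of degree `L` via Rodrigues' formula. -/
noncomputable def legendreP (L : ℕ) : Polynomial ℝ :=
  Polynomial.C (1 / ((2 : ℝ) ^ L * (L.factorial : ℝ))) *
    (⇑Polynomial.derivative)^[L] ((Polynomial.X ^ 2 - 1) ^ L)

/-- The Fourier–Legendre coefficient `a_{LN}(k)` of `J_N(k·)`. -/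
noncomputable def fourierLegendreCoeffJ (L N : ℕ) (k : ℝ) : ℝ :=
  ((2 * (L : ℝ) + 1) / 2) * ∫ x in (-1:ℝ)..1, besselJ N (k * x) * (legendreP L).eval x

/-- The Pochhammer symbol (rising factorial) `(a)_M = a(a+1)⋯(a+M-1)`. -/
noncomputable def poch (a : ℝ) (M : ℕ) : ℝ := ∏ i ∈ Finset.range M, (a + i)

open Polynomial
open scoped Nat

@[simp] lemma poch_zero (a : ℝ) : poch a 0 = 1 := by simp [poch]

lemma poch_succ (a : ℝ) (M : ℕ) : poch a (M + 1) = poch a M * (a + M) := by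
  simp [poch, Finset.prod_range_succ]

lemma poch_natCast_add_one (n M : ℕ) : poch (n + 1) M = (n + M)! / n ! := by
  rw [eq_div_iff (by positivity)]
  induction M with
  | zero => simp
  | succ M ih =>
    rw [poch_succ, mul_right_comm, ih, ← add_assoc, Nat.factorial_succ]
    push_cast
    ring

lemma poch_two_mul (a : ℝ) (M : ℕ) :
    poch a (2 * M) = 4 ^ M * poch (a / 2) M * poch ((a + 1) / 2) M := by
  induction M with
  | zero => simp
  | succ M ih =>
    rw [show 2 * (M + 1) = 2 * M + 1 + 1 by ring, poch_succ, poch_succ, ih, poch_succ, poch_succ]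
    push_cast
    ring

lemma poch_eq_Gamma_div {a : ℝ} (ha : 0 < a) (M : ℕ) :
    poch a M = Real.Gamma (a + M) / Real.Gamma a := by
  rw [eq_div_iff (Real.Gamma_pos_of_pos ha).ne']
  induction M with
  | zero => simp
  | succ M ih =>
    rw [poch_succ, mul_right_comm, ih, Nat.cast_succ, ← add_assoc,
      Real.Gamma_add_one (by positivity)]
    ring

lemma Real.Gamma_nat_add_three_halves (n : ℕ) :
    Real.Gamma (n + 3 / 2) = √π * (2 * n + 1)! / (2 ^ (2 * n + 1) * n !) := by
  have h := Real.Gamma_nat_add_one_add_half n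
  rw [show (n : ℝ) + 1 + 1 / 2 = n + 3 / 2 by ring] at h
  rw [h, Nat.factorial_eq_mul_doubleFactorial, Nat.doubleFactorial_two_mul]
  push_cast
  field_simp
  ring

section Bessel

variable (N m : ℕ)

noncomputable def besselTerm (x : ℝ) : ℝ :=
  (-1) ^ m * (x / 2) ^ (2 * m + N) / (m ! * (m + N)!)

lemma besselTerm_mul (x y : ℝ) : besselTerm N m (x * y) = besselTerm N m x * y ^ (2 * m + N) := by
  simp only [besselTerm, mul_div_right_comm x y 2, mul_pow]
  ring

lemma abs_besselTerm_le (x : ℝ) :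
    |besselTerm N m x| ≤ (|x| / 2) ^ N * ((x ^ 2 / 4) ^ m / m !) := by
  have hfact : (m ! : ℝ) ≤ m ! * (m + N)! :=
    le_mul_of_one_le_right (by positivity) (Nat.one_le_cast.mpr (Nat.factorial_pos _))
  have hpow : (|x| / 2) ^ (2 * m + N) = (|x| / 2) ^ N * (x ^ 2 / 4) ^ m := by
    rw [pow_add, pow_mul, div_pow, sq_abs]
    ring
  simp only [besselTerm, abs_div, abs_mul, abs_pow, abs_neg, abs_one, one_pow, one_mul,
    Nat.abs_cast, abs_two]
  rw [hpow, mul_div_assoc]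
  gcongr

lemma hasSum_besselJ (x : ℝ) : HasSum (fun m ↦ besselTerm N m x) (besselJ N x) :=
  (Summable.of_norm_bounded ((Real.summable_pow_div_factorial _).mul_left _)
    (abs_besselTerm_le N · x)).hasSum

lemma hasSum_integral_besselJ_mul {g : ℝ → ℝ} (hg : Continuous g) (k a b : ℝ) :
    HasSum (fun m ↦ besselTerm N m k * ∫ x in a..b, x ^ (2 * m + N) * g x)
      (∫ x in a..b, besselJ N (k * x) * g x) := by
  set bound : ℕ → ℝ → ℝ :=
    fun m x ↦ (|k * x| / 2) ^ N * (((k * x) ^ 2 / 4) ^ m / m !) * |g x|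
  have hbound (x : ℝ) : HasSum (bound · x)
      ((|k * x| / 2) ^ N * Real.exp ((k * x) ^ 2 / 4) * |g x|) := by
    rw [Real.exp_eq_exp_ℝ]
    exact ((NormedSpace.expSeries_div_hasSum_exp ((k * x) ^ 2 / 4 : ℝ)).mul_left _).mul_right _
  have hterm (m : ℕ) : Continuous fun x ↦ besselTerm N m (k * x) * g x := by
    unfold besselTerm; fun_prop
  have hsum : HasSum (fun m ↦ ∫ x in a..b, besselTerm N m (k * x) * g x)
      (∫ x in a..b, besselJ N (k * x) * g x) :=
    intervalIntegral.hasSum_integral_of_dominated_convergence bound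
      (fun m ↦ (hterm m).aestronglyMeasurable)
      (fun m ↦ .of_forall fun x _ ↦ by
        rw [norm_mul, Real.norm_eq_abs, Real.norm_eq_abs]
        exact mul_le_mul_of_nonneg_right (abs_besselTerm_le N m _) (abs_nonneg _))
      (.of_forall fun x _ ↦ (hbound x).summable)
      (by
        simp_rw [fun x ↦ (hbound x).tsum_eq]
        exact (by fun_prop : Continuous _).intervalIntegrable _ _)
      (.of_forall fun x _ ↦ (hasSum_besselJ N (k * x)).mul_right (g x))
  refine hsum.congr_fun fun m ↦ ?_
  simp_rw [besselTerm_mul, mul_assoc, intervalIntegral.integral_const_mul]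

end Bessel

lemma integral_eval_mul_iterate_derivative {a b : ℝ} {q : ℝ[X]} {n : ℕ}
    (hq : ∀ j < n, (derivative^[j] q).eval a = 0 ∧ (derivative^[j] q).eval b = 0) (p : ℝ[X]) :
    ∫ x in a..b, p.eval x * (derivative^[n] q).eval x =
      (-1) ^ n * ∫ x in a..b, (derivative^[n] p).eval x * q.eval x := by
  induction n generalizing p with
  | zero => simp
  | succ n ih =>
    obtain ⟨ha, hb⟩ := hq n n.lt_succ_self
    rw [Function.iterate_succ_apply', intervalIntegral.integral_mul_deriv_eq_deriv_mul
        (fun x _ ↦ p.hasDerivAt x) (fun x _ ↦ (derivative^[n] q).hasDerivAt x)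
        ((derivative p).continuous.intervalIntegrable _ _)
        ((derivative (derivative^[n] q)).continuous.intervalIntegrable _ _),
      ha, hb, ih (fun j hj ↦ hq j (hj.trans n.lt_succ_self)), ← Function.iterate_succ_apply]
    ring

lemma eval_iterate_derivative_sq_sub_one_pow {L j : ℕ} (hj : j < L) {x : ℝ} (hx : x ^ 2 = 1) :
    (derivative^[j] ((X ^ 2 - 1 : ℝ[X]) ^ L)).eval x = 0 := by
  obtain ⟨r, hr⟩ := pow_sub_dvd_iterate_derivative_pow (X ^ 2 - 1 : ℝ[X]) L j
  rw [hr, eval_mul, eval_pow, eval_sub, eval_pow, eval_X, eval_one, hx, sub_self,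
    zero_pow (by omega), zero_mul]

lemma integral_pow_mul_legendreP (L n : ℕ) :
    ∫ x in (-1 : ℝ)..1, x ^ n * (legendreP L).eval x =
      (-1) ^ L * n.descFactorial L / (2 ^ L * L !) *
        ∫ x in (-1 : ℝ)..1, x ^ (n - L) * (x ^ 2 - 1) ^ L := by
  have hvanish (j : ℕ) (hj : j < L) :
      (derivative^[j] ((X ^ 2 - 1 : ℝ[X]) ^ L)).eval (-1) = 0 ∧
        (derivative^[j] ((X ^ 2 - 1 : ℝ[X]) ^ L)).eval 1 = 0 :=
    ⟨eval_iterate_derivative_sq_sub_one_pow hj (by norm_num),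
      eval_iterate_derivative_sq_sub_one_pow hj (by norm_num)⟩
  have h := integral_eval_mul_iterate_derivative hvanish (X ^ n)
  simp only [iterate_derivative_X_pow_eq_smul, eval_smul, eval_pow, eval_X, eval_sub,
    eval_one, smul_eq_mul, mul_assoc, intervalIntegral.integral_const_mul] at h
  simp only [legendreP, eval_mul, eval_C]
  simp_rw [mul_left_comm _ (1 / _ : ℝ), intervalIntegral.integral_const_mul, h]
  ring

lemma integral_pow_mul_legendreP_of_lt {L n : ℕ} (h : n < L) :
    ∫ x in (-1 : ℝ)..1, x ^ n * (legendreP L).eval x = 0 := by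
  simp [integral_pow_mul_legendreP, Nat.descFactorial_eq_zero_iff_lt.mpr h]

lemma integral_pow_mul_sq_sub_one_pow_succ (M L : ℕ) :
    (2 * M + 1 : ℝ) * ∫ x in (-1 : ℝ)..1, x ^ (2 * M) * (x ^ 2 - 1) ^ (L + 1) =
      -((2 * L + 2 : ℝ) * ∫ x in (-1 : ℝ)..1, x ^ (2 * M + 2) * (x ^ 2 - 1) ^ L) := by
  have hderiv (x : ℝ) : HasDerivAt (fun x : ℝ ↦ x ^ (2 * M + 1) * (x ^ 2 - 1) ^ (L + 1))
      ((2 * M + 1) * (x ^ (2 * M) * (x ^ 2 - 1) ^ (L + 1)) +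
        (2 * L + 2) * (x ^ (2 * M + 2) * (x ^ 2 - 1) ^ L)) x := by
    refine ((hasDerivAt_pow (2 * M + 1) x).fun_mul
      (((hasDerivAt_pow 2 x).sub_const 1).fun_pow (L + 1))).congr_deriv ?_
    simp only [Nat.add_sub_cancel]
    push_cast
    ring
  have hftc := intervalIntegral.integral_eq_sub_of_hasDerivAt (fun x _ ↦ hderiv x)
    ((by fun_prop : Continuous _).intervalIntegrable (-1) 1)
  rw [intervalIntegral.integral_add ((by fun_prop : Continuous _).intervalIntegrable _ _)
      ((by fun_prop : Continuous _).intervalIntegrable _ _),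
    intervalIntegral.integral_const_mul, intervalIntegral.integral_const_mul] at hftc
  norm_num at hftc
  linarith

lemma integral_pow_mul_sq_sub_one_pow (L : ℕ) : ∀ M : ℕ,
    ∫ x in (-1 : ℝ)..1, x ^ (2 * M) * (x ^ 2 - 1) ^ L =
      (-1 : ℝ) ^ L * 2 * 4 ^ L * L ! * (M + L)! * (2 * M)! / ((2 * M + 2 * L + 1)! * M !) := by
  induction L with
  | zero =>
    intro M
    have hodd : (-1 : ℝ) ^ (2 * M + 1) = -1 := by rw [pow_succ, pow_mul]; norm_num
    simp only [pow_zero, mul_one, integral_pow, hodd, add_zero, Nat.factorial_succ]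
    push_cast
    field_simp
    ring
  | succ L ih =>
    intro M
    have hrec := integral_pow_mul_sq_sub_one_pow_succ M L
    rw [show 2 * M + 2 = 2 * (M + 1) by ring, ih] at hrec
    rw [← mul_right_inj' (by positivity : (2 * M + 1 : ℝ) ≠ 0), hrec]
    rw [show M + 1 + L = M + (L + 1) by ring,
      show 2 * (M + 1) + 2 * L + 1 = 2 * M + 2 * (L + 1) + 1 by ring]
    simp only [Nat.factorial_succ, show 2 * (M + 1) = 2 * M + 1 + 1 by ring]
    push_cast
    field_simp
    ring

lemma integral_pow_mul_legendreP_two_mul_add (L M : ℕ) :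
    ∫ x in (-1 : ℝ)..1, x ^ (2 * M + L) * (legendreP L).eval x =
      2 ^ (L + 1) * (2 * M + L)! * (M + L)! / ((2 * M + 2 * L + 1)! * M !) := by
  have hdesc : ((2 * M)! : ℝ) * (2 * M + L).descFactorial L = (2 * M + L)! := by
    exact_mod_cast Nat.add_sub_cancel (2 * M) L ▸ Nat.factorial_mul_descFactorial (by omega)
  rw [integral_pow_mul_legendreP, Nat.add_sub_cancel, integral_pow_mul_sq_sub_one_pow, ← hdesc]
  rw [show (4 : ℝ) ^ L = 2 ^ L * 2 ^ L by rw [← mul_pow]; norm_num]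
  field_simp
  rw [← pow_mul, pow_mul', neg_one_sq, one_pow, one_mul, pow_succ]

lemma fourierLegendreCoeffJ_summand_eq {L N d : ℕ} (h : 2 * d + N = L) (k : ℝ) (M : ℕ) :
    (2 * (L : ℝ) + 1) / 2 * (besselTerm N (M + d) k *
        ∫ x in (-1 : ℝ)..1, x ^ (2 * (M + d) + N) * (legendreP L).eval x) =
      √π * (2 : ℝ) ^ (-(2 * (L : ℤ)) - 1) * (2 * (L : ℝ) + 1) * (-1 : ℝ) ^ d * k ^ L *
        ((L.choose d : ℝ) / Real.Gamma ((L : ℝ) + 3 / 2)) *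
        (poch (((L : ℝ) + 1) / 2) M * poch (((L : ℝ) + 2) / 2) M /
            (poch ((L : ℝ) + 3 / 2) M * poch (((L : ℝ) - (N : ℝ)) / 2 + 1) M *
              poch (((L : ℝ) + (N : ℝ)) / 2 + 1) M) *
          (-k ^ 2 / 4) ^ M / (M ! : ℝ)) := by
  have hL : (L : ℝ) = 2 * d + N := by rw [← h]; push_cast; ring
  have hpair : poch (((L : ℝ) + 1) / 2) M * poch (((L : ℝ) + 2) / 2) M =
      (2 * M + L)! / (L ! * 4 ^ M) := by
    rw [show ((L : ℝ) + 2) / 2 = ((L : ℝ) + 1 + 1) / 2 by ring, div_mul_eq_div_div,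
      eq_div_iff (by positivity), add_comm (2 * M), ← poch_natCast_add_one, poch_two_mul]
    ring
  have hminus : ((L : ℝ) - N) / 2 + 1 = (d : ℕ) + 1 := by rw [hL]; ring
  have hplus : ((L : ℝ) + N) / 2 + 1 = (d + N : ℕ) + 1 := by rw [hL]; push_cast; ring
  have hGamma : poch ((L : ℝ) + 3 / 2) M =
      Real.Gamma ((M + L : ℕ) + 3 / 2) / Real.Gamma (L + 3 / 2) := by
    rw [poch_eq_Gamma_div (by positivity)]
    push_cast
    ring_nf
  have hzpow : (2 : ℝ) ^ (-(2 * (L : ℤ)) - 1) = ((2 : ℝ) ^ (2 * L + 1))⁻¹ := by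
    rw [← zpow_natCast, ← zpow_neg]
    push_cast
    ring_nf
  have hk : (-k ^ 2 / 4) ^ M = (-1) ^ M * (k / 2) ^ (2 * M) := by
    rw [pow_mul, neg_div, neg_pow, div_pow k 2 2]
    norm_num
  rw [besselTerm, show 2 * (M + d) + N = 2 * M + L by omega,
    integral_pow_mul_legendreP_two_mul_add, hpair, hminus, hplus, hGamma, poch_natCast_add_one,
    poch_natCast_add_one, Real.Gamma_nat_add_three_halves, Real.Gamma_nat_add_three_halves,
    Nat.cast_choose ℝ (show d ≤ L by omega), show L - d = d + N by omega,
    show d + N + M = M + d + N by ring, add_comm d M,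
    show 2 * (M + L) + 1 = 2 * M + 2 * L + 1 by ring,
    hzpow, hk, pow_add (-1 : ℝ), pow_add (k / 2), div_pow k 2 L]
  field_simp
  rw [show (4 : ℝ) ^ M = 2 ^ (2 * M) by rw [pow_mul]; norm_num]
  ring

/-- For `N ≤ L` with `L ≡ N (mod 2)`, the Fourier–Legendre coefficient
`a_{LN}(k)` equals `√π 2^{-2L-1} (2L+1) (-1)^{(L-N)/2} k^L (C(L,(L-N)/2)/Γ(L+3/2))`
times the `₂F₃` hypergeometric series with parameters
`((L+1)/2, L/2+1; L+3/2, (L-N)/2+1, (L+N)/2+1)` evaluated at `-k²/4`. -/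
theorem fourierLegendreCoeffJ_eq_2F3 (L N : ℕ) (hNL : N ≤ L) (hpar : L % 2 = N % 2)
    (k : ℝ) :
    fourierLegendreCoeffJ L N k =
      Real.sqrt π * (2 : ℝ) ^ (-(2 * (L : ℤ)) - 1) * (2 * (L : ℝ) + 1) *
        (-1 : ℝ) ^ ((L - N) / 2) * k ^ L *
        ((L.choose ((L - N) / 2) : ℝ) / Real.Gamma ((L : ℝ) + 3 / 2)) *
        ∑' M : ℕ,
          (poch (((L : ℝ) + 1) / 2) M * poch (((L : ℝ) + 2) / 2) M /
            (poch ((L : ℝ) + 3 / 2) M * poch (((L : ℝ) - (N : ℝ)) / 2 + 1) M *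
              poch (((L : ℝ) + (N : ℝ)) / 2 + 1) M)) *
          (-k ^ 2 / 4) ^ M / (M.factorial : ℝ) := by
  obtain ⟨d, hd, hL⟩ : ∃ d, (L - N) / 2 = d ∧ 2 * d + N = L := ⟨_, rfl, by omega⟩
  have hsum := hasSum_integral_besselJ_mul N (legendreP L).continuous k (-1) 1
  have hlow : ∑ m ∈ Finset.range d,
      besselTerm N m k * ∫ x in (-1 : ℝ)..1, x ^ (2 * m + N) * (legendreP L).eval x = 0 :=
    Finset.sum_eq_zero fun m hm ↦ by
      rw [integral_pow_mul_legendreP_of_lt (by simp at hm; omega), mul_zero]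
  rw [← hasSum_nat_add_iff' d, hlow, sub_zero] at hsum
  rw [hd, fourierLegendreCoeffJ, ← hsum.tsum_eq, ← tsum_mul_left, ← tsum_mul_left]
  exact tsum_congr (fourierLegendreCoeffJ_summand_eq hL k)
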